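/- arXiv:2312.12448 — 6 statements merged into one kernel-verified Lean document; each statement's English description precedes it below -/
import Mathlib

section
/- Let n ≥ 2. The image of the unitary group U(n) under the diagonal product map Πd (where Πd(A) := ∏_{j=1}^n A_{jj}) is exactly the closed unit disk in ℂ: for every U ∈ U(n) one has |Πd(U)| ≤ 1, and conversely for every complex number z with |z| ≤ 1 there exists U ∈ U(n) with Πd(U) = z. -/
/-!
Every entry of a unitary matrix has modulus at most `1`, which gives the bound. Conversely, write
`z = r e^{iθ}` with `0 ≤ r ≤ 1`: the `2 × 2` unitary `[[√r, -√(1-r)], [√(1-r), √r]] · diag(e^{iθ}, 1)`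
has diagonal product `z`, and padding it with an identity block keeps both unitarity and the
diagonal product.
-/

open Matrix Complex

namespace Matrix

section UnitaryGroup

variable {α m n : Type*} [CommRing α] [StarRing α] [Fintype m] [DecidableEq m] [Fintype n]
  [DecidableEq n]

theorem diagonal_mem_unitaryGroup {d : n → α} (hd : ∀ i, d i ∈ unitary α) :
    diagonal d ∈ unitaryGroup n α := by
  rw [mem_unitaryGroup_iff, star_eq_conjTranspose, diagonal_conjTranspose, diagonal_mul_diagonal,
    ← diagonal_one]
  exact congrArg diagonal (funext fun i => Unitary.mul_star_self_of_mem (hd i))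

theorem fin_two_mem_unitaryGroup {a b : α} (h : a * star a + b * star b = 1) :
    !![a, -star b; b, star a] ∈ unitaryGroup (Fin 2) α := by
  rw [mem_unitaryGroup_iff]
  ext i j
  fin_cases i <;> fin_cases j <;> simp [mul_apply, Fin.sum_univ_two]
  · linear_combination h
  · ring
  · ring
  · linear_combination h

theorem fromBlocks_mem_unitaryGroup {A : Matrix m m α} {D : Matrix n n α}
    (hA : A ∈ unitaryGroup m α) (hD : D ∈ unitaryGroup n α) :
    fromBlocks A 0 0 D ∈ unitaryGroup (m ⊕ n) α := by
  rw [mem_unitaryGroup_iff, star_eq_conjTranspose, fromBlocks_conjTranspose, fromBlocks_multiply]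
  simp only [← star_eq_conjTranspose, mem_unitaryGroup_iff.mp hA, mem_unitaryGroup_iff.mp hD,
    conjTranspose_zero, Matrix.mul_zero, Matrix.zero_mul, add_zero, zero_add, fromBlocks_one]

theorem reindex_mem_unitaryGroup {A : Matrix m m α} (e : m ≃ n) (hA : A ∈ unitaryGroup m α) :
    reindex e e A ∈ unitaryGroup n α := by
  rw [mem_unitaryGroup_iff, star_eq_conjTranspose, reindex_apply, conjTranspose_submatrix,
    submatrix_mul_equiv, ← star_eq_conjTranspose, mem_unitaryGroup_iff.mp hA, submatrix_one_equiv]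

end UnitaryGroup

section DiagonalProduct

variable {α m n : Type*} [CommMonoid α] [Fintype m] [Fintype n]

theorem prod_diag_reindex (e : m ≃ n) (A : Matrix m m α) :
    ∏ i, reindex e e A i i = ∏ i, A i i := by
  simp [reindex_apply, ← e.symm.prod_comp]

theorem prod_diag_fromBlocks (A : Matrix m m α) (B : Matrix m n α) (C : Matrix n m α)
    (D : Matrix n n α) : ∏ i, fromBlocks A B C D i i = (∏ i, A i i) * ∏ i, D i i :=
  Fintype.prod_sum_type _

end DiagonalProduct

end Matrix

theorem Complex.ofReal_sqrt_mul_star {r : ℝ} (hr : 0 ≤ r) : (√r : ℂ) * star (√r : ℂ) = r := by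
  rw [star_def, conj_ofReal, ← ofReal_mul, Real.mul_self_sqrt hr]

theorem exists_mem_unitaryGroup_fin_two_prod_diag_eq {z : ℂ} (hz : ‖z‖ ≤ 1) :
    ∃ U ∈ unitaryGroup (Fin 2) ℂ, ∏ i, U i i = z := by
  set a : ℂ := ↑(√‖z‖)
  set b : ℂ := ↑(√(1 - ‖z‖))
  set u : ℂ := exp (arg z * I)
  have hab : a * star a + b * star b = 1 := by
    rw [ofReal_sqrt_mul_star (norm_nonneg z), ofReal_sqrt_mul_star (sub_nonneg.mpr hz)]
    push_cast; ring
  have hu : u ∈ unitary ℂ := by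
    rw [Unitary.mem_iff_self_mul_star, star_def, mul_conj', norm_exp_ofReal_mul_I, ofReal_one,
      one_pow]
  refine ⟨!![a, -star b; b, star a] * diagonal ![u, 1],
    Submonoid.mul_mem _ (fin_two_mem_unitaryGroup hab) (diagonal_mem_unitaryGroup ?_), ?_⟩
  · intro i; fin_cases i; exacts [hu, one_mem _]
  · calc ∏ i, (!![a, -star b; b, star a] * diagonal ![u, 1]) i i = a * star a * u := by
          simp [mul_diagonal, Fin.prod_univ_two]; ring
    _ = z := by rw [ofReal_sqrt_mul_star (norm_nonneg z), norm_mul_exp_arg_mul_I]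

/-- For `n ≥ 2`, the image of the unitary group `U(n)` under the diagonal product
map `Πd(A) = ∏ⱼ Aⱼⱼ` is exactly the closed unit disk in `ℂ`. -/
theorem diagonalProduct_unitaryGroup_image (n : ℕ) (hn : 2 ≤ n) :
    (∀ U : Matrix (Fin n) (Fin n) ℂ, U ∈ Matrix.unitaryGroup (Fin n) ℂ →
      ‖∏ j, U j j‖ ≤ 1) ∧
    (∀ z : ℂ, ‖z‖ ≤ 1 →
      ∃ U ∈ Matrix.unitaryGroup (Fin n) ℂ, (∏ j, U j j) = z) := by
  refine ⟨fun U hU => ?_, fun z hz => ?_⟩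
  · rw [norm_prod]
    exact Finset.prod_le_one (fun _ _ => norm_nonneg _) fun j _ => entry_norm_bound_of_unitary hU j j
  · obtain ⟨k, rfl⟩ := Nat.exists_eq_add_of_le hn
    obtain ⟨A, hA, hAz⟩ := exists_mem_unitaryGroup_fin_two_prod_diag_eq hz
    refine ⟨reindex finSumFinEquiv finSumFinEquiv (fromBlocks A 0 0 1),
      reindex_mem_unitaryGroup _ (fromBlocks_mem_unitaryGroup hA (one_mem _)), ?_⟩
    rw [prod_diag_reindex, prod_diag_fromBlocks, hAz]
    simp
end

section
/- Let n ≥ 1. The image of the special orthogonal group SO(n) under the diagonal product map is the real interval [−(1 − 2/n)^n, 1]: {Πd(U) : U ∈ SO(n)} = [−(1 − 2/n)^n, 1]. -/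
/-!
Columns of an orthogonal matrix are unit vectors, so its diagonal entries lie in `[-1, 1]`; this
gives the upper bound. If `Πd(U) < 0`, flipping the signs of the rows of `U` with a negative
diagonal entry gives an orthogonal `V` with `det V = -1` and diagonal `|U j j|`. Such a `V` has a
vector `x` with `V x = -x`, and `V H_x` (with `H_x` the Householder reflection along `x`) is
orthogonal of trace `tr V + 2 ≤ n`. Hence `tr V ≤ n - 2`, and AM–GM gives
`∏ |U j j| ≤ (1 - 2/n)ⁿ`.

Conversely, for `w_t = (1, t, …, t)` the matrices `H_{w_t} H_{e_0}` lie in `SO(n)`, and their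
diagonal product is continuous in `t`, equal to `1` at `t = 0` and to `-(1 - 2/n)ⁿ` at `t = 1`.
-/

open Matrix Finset

theorem Real.prod_le_arith_mean_pow {ι : Type*} [Fintype ι] (z : ι → ℝ) (hz : ∀ i, 0 ≤ z i) :
    ∏ i, z i ≤ ((∑ i, z i) / Fintype.card ι) ^ Fintype.card ι := by
  rcases isEmpty_or_nonempty ι with hι | hι
  · simp
  have hcard : Fintype.card ι ≠ 0 := Fintype.card_ne_zero
  have hmean := Real.geom_mean_le_arith_mean univ (fun _ => 1) z (fun _ _ => zero_le_one)
    (by simpa using Fintype.card_pos) (fun i _ => hz i)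
  simp only [Real.rpow_one, one_mul, sum_const, card_univ, nsmul_eq_mul, mul_one] at hmean
  calc ∏ i, z i = ((∏ i, z i) ^ (Fintype.card ι : ℝ)⁻¹) ^ Fintype.card ι :=
        (Real.rpow_inv_natCast_pow (prod_nonneg fun i _ => hz i) hcard).symm
    _ ≤ _ := pow_le_pow_left₀ (Real.rpow_nonneg (prod_nonneg fun i _ => hz i) _) hmean _

namespace Matrix

variable {ι : Type*} [Fintype ι] [DecidableEq ι]

noncomputable def householder (x : ι → ℝ) : Matrix ι ι ℝ :=
  1 - (2 / (x ⬝ᵥ x)) • vecMulVec x x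

theorem householder_transpose (x : ι → ℝ) : (householder x)ᵀ = householder x := by
  simp [householder, transpose_sub, transpose_smul, transpose_vecMulVec]

theorem householder_mul_self {x : ι → ℝ} (hx : x ⬝ᵥ x ≠ 0) :
    householder x * householder x = 1 := by
  have key : (2 / (x ⬝ᵥ x)) * (2 / (x ⬝ᵥ x)) * (x ⬝ᵥ x) = 2 / (x ⬝ᵥ x) + 2 / (x ⬝ᵥ x) := by
    field_simp; ring
  rw [householder, sub_mul, mul_sub, mul_sub, smul_mul_smul, vecMulVec_mul_vecMulVec,
    vecMulVec_smul, smul_smul, key, add_smul]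
  simp only [one_mul, mul_one]
  abel

theorem householder_mem_orthogonalGroup {x : ι → ℝ} (hx : x ⬝ᵥ x ≠ 0) :
    householder x ∈ orthogonalGroup ι ℝ := by
  rw [mem_orthogonalGroup_iff', householder_transpose, householder_mul_self hx]

theorem det_householder {x : ι → ℝ} (hx : x ⬝ᵥ x ≠ 0) : (householder x).det = -1 := by
  rw [householder, sub_eq_add_neg, ← neg_smul, ← smul_vecMulVec, vecMulVec_eq Unit,
    det_one_add_replicateCol_mul_replicateRow, dotProduct_smul, smul_eq_mul]
  field_simp
  ring

theorem trace_mul_householder {V : Matrix ι ι ℝ} {x : ι → ℝ} (hx : x ⬝ᵥ x ≠ 0)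
    (hVx : V *ᵥ x = -x) : (V * householder x).trace = V.trace + 2 := by
  rw [householder, mul_sub, mul_one, Matrix.mul_smul, mul_vecMulVec, hVx, trace_sub, trace_smul,
    trace_vecMulVec, neg_dotProduct, smul_eq_mul]
  field_simp
  ring

theorem householder_apply_self (x : ι → ℝ) (j : ι) :
    householder x j j = 1 - 2 * x j ^ 2 / (x ⬝ᵥ x) := by
  simp only [householder, sub_apply, one_apply_eq, smul_apply, vecMulVec_apply, smul_eq_mul]
  ring

theorem householder_single (i : ι) :
    householder (Pi.single i 1) = diagonal (Function.update 1 i (-1)) := by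
  ext j k
  rcases eq_or_ne k j with rfl | hkj
  · rcases eq_or_ne k i with rfl | hki <;> norm_num [householder, vecMulVec_apply, *]
  · simpa [householder, vecMulVec_apply, Pi.single_apply, hkj.symm] using
      fun (hki : k = i) (hji : j = i) => hkj (hki.trans hji.symm)

theorem abs_apply_le_one_of_mem_orthogonalGroup {U : Matrix ι ι ℝ}
    (hU : U ∈ orthogonalGroup ι ℝ) (i j : ι) : |U i j| ≤ 1 := by
  have hcol : ∑ k, U k j ^ 2 = 1 := by
    simpa [mul_apply, sq] using congrFun₂ ((mem_orthogonalGroup_iff' ι ℝ).1 hU) j j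
  rw [← sq_le_one_iff_abs_le_one, ← hcol]
  exact single_le_sum (fun k _ => sq_nonneg (U k j)) (mem_univ i)

theorem prod_diag_le_one_of_mem_orthogonalGroup {U : Matrix ι ι ℝ}
    (hU : U ∈ orthogonalGroup ι ℝ) : ∏ j, U j j ≤ 1 :=
  (le_abs_self _).trans <| (abs_prod _ _).trans_le <|
    prod_le_one (fun _ _ => abs_nonneg _)
      fun j _ => abs_apply_le_one_of_mem_orthogonalGroup hU j j

theorem trace_le_card_of_mem_orthogonalGroup {U : Matrix ι ι ℝ}
    (hU : U ∈ orthogonalGroup ι ℝ) : U.trace ≤ Fintype.card ι := by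
  rw [trace, ← nsmul_one, ← card_univ, ← sum_const]
  exact sum_le_sum fun j _ => (abs_le.1 (abs_apply_le_one_of_mem_orthogonalGroup hU j j)).2

theorem exists_mulVec_eq_neg_self_of_det_eq_neg_one {U : Matrix ι ι ℝ}
    (hU : U ∈ orthogonalGroup ι ℝ) (hdet : U.det = -1) : ∃ x ≠ 0, U *ᵥ x = -x := by
  have h : (1 + U).det = 0 := by
    have := congrArg det (show Uᵀ * (1 + U) = (1 + U)ᵀ by
      rw [mul_add, mul_one, (mem_orthogonalGroup_iff' ι ℝ).1 hU, transpose_add, transpose_one,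
        add_comm])
    rw [det_mul, det_transpose, hdet, det_transpose] at this
    linarith
  obtain ⟨x, hx, hUx⟩ := exists_mulVec_eq_zero_iff.2 h
  rw [add_mulVec, one_mulVec, add_eq_zero_iff_eq_neg'] at hUx
  exact ⟨x, hx, hUx⟩

theorem trace_le_card_sub_two_of_det_eq_neg_one {U : Matrix ι ι ℝ}
    (hU : U ∈ orthogonalGroup ι ℝ) (hdet : U.det = -1) : U.trace ≤ Fintype.card ι - 2 := by
  obtain ⟨x, hx, hUx⟩ := exists_mulVec_eq_neg_self_of_det_eq_neg_one hU hdet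
  have hxx : x ⬝ᵥ x ≠ 0 := fun h => hx (dotProduct_self_eq_zero.1 h)
  have := trace_le_card_of_mem_orthogonalGroup
    (Submonoid.mul_mem _ hU (householder_mem_orthogonalGroup hxx))
  rw [trace_mul_householder hxx hUx] at this
  linarith

theorem exists_det_eq_neg_one_diag_eq_abs {U : Matrix ι ι ℝ}
    (hU : U ∈ specialOrthogonalGroup ι ℝ) (hneg : ∏ j, U j j < 0) :
    ∃ V ∈ orthogonalGroup ι ℝ, V.det = -1 ∧ ∀ j, V j j = |U j j| := by
  obtain ⟨hU, hdet⟩ := mem_specialOrthogonalGroup_iff.1 hU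
  set s : ι → ℝ := fun j => if U j j < 0 then -1 else 1
  have hs_sq : ∀ j, s j * s j = 1 := fun j => by dsimp only [s]; split_ifs <;> norm_num
  have hs_abs : ∀ j, s j * U j j = |U j j| := fun j => by
    dsimp only [s]; split_ifs with h
    · rw [abs_of_neg h, neg_one_mul]
    · rw [abs_of_nonneg (not_lt.1 h), one_mul]
  have hD : diagonal s ∈ orthogonalGroup ι ℝ := by
    rw [mem_orthogonalGroup_iff', diagonal_transpose, diagonal_mul_diagonal, funext hs_sq,
      diagonal_one]
  have hprod_s : ∏ j, s j = -1 := by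
    refine mul_right_cancel₀ hneg.ne (?_ : _ = -1 * ∏ j, U j j)
    rw [← prod_mul_distrib, prod_congr rfl fun j _ => hs_abs j, ← abs_prod, abs_of_neg hneg,
      neg_one_mul]
  refine ⟨diagonal s * U, Submonoid.mul_mem _ hD hU, ?_, fun j => ?_⟩
  · rw [det_mul, det_diagonal, hprod_s, hdet, mul_one]
  · rw [diagonal_mul, hs_abs]

theorem neg_one_sub_two_div_card_pow_le_prod_diag (hn : 2 ≤ Fintype.card ι)
    {U : Matrix ι ι ℝ} (hU : U ∈ specialOrthogonalGroup ι ℝ) :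
    -(1 - 2 / (Fintype.card ι : ℝ)) ^ Fintype.card ι ≤ ∏ j, U j j := by
  set n := Fintype.card ι
  have hn_pos : (0 : ℝ) < n := by positivity
  have hbase : 0 ≤ 1 - 2 / (n : ℝ) := by
    rw [sub_nonneg, div_le_one hn_pos]; exact_mod_cast hn
  rcases le_or_gt 0 (∏ j, U j j) with hnonneg | hneg
  · linarith [pow_nonneg hbase n]
  obtain ⟨V, hV, hdet, hdiag⟩ := exists_det_eq_neg_one_diag_eq_abs hU hneg
  have hV_nonneg : ∀ j, 0 ≤ V j j := fun j => hdiag j ▸ abs_nonneg _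
  have hmean : V.trace / n ≤ 1 - 2 / n := by
    rw [div_le_iff₀ hn_pos, sub_mul, div_mul_cancel₀ _ hn_pos.ne', one_mul]
    exact trace_le_card_sub_two_of_det_eq_neg_one hV hdet
  have hV_prod : ∏ j, V j j ≤ (1 - 2 / n) ^ n :=
    (Real.prod_le_arith_mean_pow _ hV_nonneg).trans <|
      pow_le_pow_left₀ (div_nonneg (sum_nonneg fun j _ => hV_nonneg j) hn_pos.le) hmean n
  have hU_prod : ∏ j, U j j = -∏ j, V j j := by
    simp_rw [hdiag, ← abs_prod, abs_of_neg hneg, neg_neg]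
  linarith

theorem prod_diag_mul_householder_single (M : Matrix ι ι ℝ) (i : ι) :
    ∏ j, (M * householder (Pi.single i 1)) j j = -∏ j, M j j := by
  simp_rw [householder_single, mul_diagonal, prod_mul_distrib, prod_update_of_mem (mem_univ i)]
  simp

theorem householder_mul_householder_single_mem_specialOrthogonalGroup {x : ι → ℝ}
    (hx : x ⬝ᵥ x ≠ 0) (i : ι) :
    householder x * householder (Pi.single i 1) ∈ specialOrthogonalGroup ι ℝ := by
  have hi : (Pi.single i 1 : ι → ℝ) ⬝ᵥ Pi.single i 1 ≠ 0 := by simp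
  refine mem_specialOrthogonalGroup_iff.2 ⟨Submonoid.mul_mem _
    (householder_mem_orthogonalGroup hx) (householder_mem_orthogonalGroup hi), ?_⟩
  rw [det_mul, det_householder hx, det_householder hi]
  norm_num

theorem exists_mem_specialOrthogonalGroup_prod_diag_eq [Nonempty ι] {r : ℝ}
    (hr : r ∈ Set.Icc (-(1 - 2 / (Fintype.card ι : ℝ)) ^ Fintype.card ι) 1) :
    ∃ U ∈ specialOrthogonalGroup ι ℝ, ∏ j, U j j = r := by
  set i := Classical.arbitrary ι
  let w : ℝ → ι → ℝ := fun t => Function.update (fun _ => t) i 1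
  have hw : ∀ t, w t ⬝ᵥ w t ≠ 0 := fun t => by
    refine (lt_of_lt_of_le one_pos ?_).ne'
    simpa [w, dotProduct, sq] using
      single_le_sum (fun j _ => mul_self_nonneg (w t j)) (mem_univ i)
  let f : ℝ → ℝ := fun t => ∏ j, (householder (w t) * householder (Pi.single i 1)) j j
  have hf : Continuous f := by
    simp only [f, prod_diag_mul_householder_single, householder_apply_self]
    have hw_cont : Continuous w := by fun_prop
    fun_prop (disch := exact hw _)
  have hf0 : f 0 = 1 := by
    have hw0 : w 0 = Pi.single i 1 := rfl
    simp [f, hw0, householder_mul_self]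
  have hf1 : f 1 = -(1 - 2 / (Fintype.card ι : ℝ)) ^ Fintype.card ι := by
    simp [f, w, prod_diag_mul_householder_single, householder_apply_self, dotProduct]
  have hivt := intermediate_value_Icc' zero_le_one hf.continuousOn
  rw [hf0, hf1] at hivt
  obtain ⟨t, -, ht⟩ := hivt hr
  exact ⟨_, householder_mul_householder_single_mem_specialOrthogonalGroup (hw t) i, ht⟩

end Matrix

/-- The image of `SO(n)` under the diagonal product map is the interval
`[−(1 − 2/n)ⁿ, 1]`. -/
theorem diagonalProduct_specialOrthogonalGroup_image (n : ℕ) (hn : 1 ≤ n) :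
    {r : ℝ | ∃ U ∈ Matrix.specialOrthogonalGroup (Fin n) ℝ, (∏ j, U j j) = r} =
      Set.Icc (-(1 - 2 / (n : ℝ)) ^ n) 1 := by
  have : Nonempty (Fin n) := ⟨⟨0, hn⟩⟩
  ext r
  refine ⟨?_, fun hr => exists_mem_specialOrthogonalGroup_prod_diag_eq (by simpa using hr)⟩
  rintro ⟨U, hU, rfl⟩
  refine ⟨?_, prod_diag_le_one_of_mem_orthogonalGroup hU.1⟩
  obtain rfl | hn := hn.eq_or_lt
  · rw [Fin.prod_univ_one, ← det_fin_one U, (mem_specialOrthogonalGroup_iff.1 hU).2]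
    norm_num
  · simpa using neg_one_sub_two_div_card_pow_le_prod_diag (by rw [Fintype.card_fin]; omega) hU
end

section
/- Let n ≥ 3 and define θ : [−π, π] → ℝ by θ(α) = α − n · arctan(sin α / (n − 1 + cos α)). Then θ is a continuous strictly increasing bijection of [−π, π] onto itself, with θ(−π) = −π, θ(0) = 0 and θ(π) = π. -/
/-!
Writing `b = n - 1`, the chain rule gives
`θ'(α) = 1 - n (b cos α + 1) / |b + e^{iα}|² = b (b - 1) (1 - cos α) / |b + e^{iα}|²`,
which is positive on `[-π, π]` except at `α = 0`. Hence `θ` is strictly increasing on `[-π, 0]`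
and on `[0, π]`, so on `[-π, π]`; since `sin (±π) = 0` it fixes `±π`, and the intermediate value
theorem gives the image.
-/

open Real Set

/-- `θ` with the integer `n` replaced by a real parameter `a`. -/
noncomputable def polarAngle (a α : ℝ) : ℝ :=
  α - a * arctan (sin α / (a - 1 + cos α))

section

variable {a : ℝ}

lemma sub_one_add_cos_pos (ha : 2 < a) (α : ℝ) : 0 < a - 1 + cos α := by
  linarith [neg_one_le_cos α]

lemma continuous_polarAngle (ha : 2 < a) : Continuous (polarAngle a) :=
  continuous_id.sub <| continuous_const.mul <| continuous_arctan.comp <|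
    continuous_sin.div (continuous_const.add continuous_cos) fun α => (sub_one_add_cos_pos ha α).ne'

lemma hasDerivAt_polarAngle (ha : 2 < a) (α : ℝ) :
    HasDerivAt (polarAngle a)
      ((a - 1) * (a - 2) * (1 - cos α) / ((a - 1 + cos α) ^ 2 + sin α ^ 2)) α := by
  have hd := (sub_one_add_cos_pos ha α).ne'
  have hD : (a - 1 + cos α) ^ 2 + sin α ^ 2 ≠ 0 := by positivity
  refine HasDerivAt.congr_deriv (f := fun α => α - a * arctan (sin α / (a - 1 + cos α)))
    ((hasDerivAt_id' α).sub <| HasDerivAt.const_mul a <| HasDerivAt.arctan <|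
      (hasDerivAt_sin α).div ((hasDerivAt_cos α).const_add (a - 1)) hd) ?_
  field_simp
  linear_combination (1 - a) * sin_sq_add_cos_sq α

lemma cos_lt_one_of_mem_Ioo {α : ℝ} (hα : α ∈ Ioo (-π) 0 ∪ Ioo 0 π) : cos α < 1 := by
  have hne : α ≠ 0 := by rcases hα with h | h <;> [exact h.2.ne; exact h.1.ne']
  have hlo : -(2 * π) < α := by rcases hα with h | h <;> linarith [h.1, h.2, pi_pos]
  have hhi : α < 2 * π := by rcases hα with h | h <;> linarith [h.1, h.2, pi_pos]
  exact (cos_le_one α).lt_of_ne fun h => hne ((cos_eq_one_iff_of_lt_of_lt hlo hhi).1 h)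

lemma strictMonoOn_polarAngle (ha : 2 < a) : StrictMonoOn (polarAngle a) (Icc (-π) π) := by
  have hpos : ∀ α, cos α < 1 →
      0 < (a - 1) * (a - 2) * (1 - cos α) / ((a - 1 + cos α) ^ 2 + sin α ^ 2) := fun α hα => by
    have := sub_one_add_cos_pos ha α
    exact div_pos (by apply mul_pos <;> [apply mul_pos; skip] <;> linarith) (by positivity)
  have piece : ∀ l r, Ioo l r ⊆ Ioo (-π) 0 ∪ Ioo 0 π → StrictMonoOn (polarAngle a) (Icc l r) :=
    fun l r hlr => strictMonoOn_of_hasDerivWithinAt_pos (convex_Icc l r)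
      (continuous_polarAngle ha).continuousOn
      (fun α _ => (hasDerivAt_polarAngle ha α).hasDerivWithinAt)
      (fun α hα => hpos α (cos_lt_one_of_mem_Ioo (hlr (by rwa [interior_Icc] at hα))))
  rw [← Icc_union_Icc_eq_Icc (neg_nonpos.2 pi_pos.le) pi_pos.le]
  exact (piece _ _ subset_union_left).union (piece _ _ subset_union_right)
    (isGreatest_Icc (neg_nonpos.2 pi_pos.le)) (isLeast_Icc pi_pos.le)

lemma polarAngle_neg_pi : polarAngle a (-π) = -π := by simp [polarAngle]

lemma polarAngle_pi : polarAngle a π = π := by simp [polarAngle]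

lemma image_polarAngle_Icc (ha : 2 < a) : polarAngle a '' Icc (-π) π = Icc (-π) π := by
  have h := (continuous_polarAngle ha).continuousOn.image_Icc_of_monotoneOn
    (neg_le_self pi_pos.le) (strictMonoOn_polarAngle ha).monotoneOn
  rwa [polarAngle_neg_pi, polarAngle_pi] at h

end

/-- For `n ≥ 3`, the polar-angle function
`θ(α) = α − n · arctan(sin α / (n − 1 + cos α))` is a continuous strictly increasing
bijection of `[−π, π]` onto itself, with `θ(−π) = −π`, `θ(0) = 0` and `θ(π) = π`. -/
theorem theta_strictMono_bijection (n : ℕ) (hn : 3 ≤ n) :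
    ContinuousOn
      (fun α : ℝ => α - n * Real.arctan (Real.sin α / ((n : ℝ) - 1 + Real.cos α)))
      (Set.Icc (-π) π) ∧
    StrictMonoOn
      (fun α : ℝ => α - n * Real.arctan (Real.sin α / ((n : ℝ) - 1 + Real.cos α)))
      (Set.Icc (-π) π) ∧
    (fun α : ℝ => α - n * Real.arctan (Real.sin α / ((n : ℝ) - 1 + Real.cos α))) ''
      Set.Icc (-π) π = Set.Icc (-π) π ∧
    (-π : ℝ) - n * Real.arctan (Real.sin (-π) / ((n : ℝ) - 1 + Real.cos (-π))) = -π ∧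
    (0 : ℝ) - n * Real.arctan (Real.sin 0 / ((n : ℝ) - 1 + Real.cos 0)) = 0 ∧
    π - n * Real.arctan (Real.sin π / ((n : ℝ) - 1 + Real.cos π)) = π := by
  have ha : (2 : ℝ) < n := by exact_mod_cast hn
  exact ⟨(continuous_polarAngle ha).continuousOn, strictMonoOn_polarAngle ha,
    image_polarAngle_Icc ha, polarAngle_neg_pi, by simp, polarAngle_pi⟩
end

section
/- Let n ≥ 3 and define θ(α) = α − n · arctan(sin α / (n − 1 + cos α)). Then for every real α ∈ (−π, π), θ is differentiable at α with θ'(α) = 2(n−1)(n−2) sin²(α/2) / ((n−2)² + 4(n−1) cos²(α/2)); in particular θ'(α) ≥ 0, with equality only at α = 0. -/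
open Real

/-!
Writing `c = cos α` and `m = n - 1`, the chain rule gives
`θ'(α) = 1 - n (1 + m c) / (m² + 2 m c + 1) = m (m - 1) (1 - c) / (m² + 2 m c + 1)`,
and the half-angle identities `1 - c = 2 sin²(α/2)`, `m² + 2 m c + 1 = (m - 1)² + 4 m cos²(α/2)`
turn this into the stated formula. For `n ≥ 3` all factors except `sin²(α/2)` are positive,
and on `(-π, π)` that one vanishes only at `α = 0`.
-/

namespace Real

theorem two_mul_sin_half_sq (x : ℝ) : 2 * sin (x / 2) ^ 2 = 1 - cos x := by
  have := cos_sq (x / 2)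
  rw [show 2 * (x / 2) = x by ring] at this
  nlinarith [sin_sq_add_cos_sq (x / 2)]

theorem sq_add_two_mul_cos_add_one_eq_cos_half (m x : ℝ) :
    m ^ 2 + 2 * m * cos x + 1 = (m - 1) ^ 2 + 4 * m * cos (x / 2) ^ 2 := by
  have := cos_sq (x / 2)
  rw [show 2 * (x / 2) = x by ring] at this
  rw [this]; ring

theorem sq_add_two_mul_cos_add_one_eq_sq_add_sin_sq (m x : ℝ) :
    m ^ 2 + 2 * m * cos x + 1 = (m + cos x) ^ 2 + sin x ^ 2 := by
  rw [sin_sq]; ring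

theorem sq_add_two_mul_cos_add_one_pos {m x : ℝ} (hm : m + cos x ≠ 0) :
    0 < m ^ 2 + 2 * m * cos x + 1 := by
  rw [sq_add_two_mul_cos_add_one_eq_sq_add_sin_sq]
  have := sq_pos_of_ne_zero hm
  positivity

theorem hasDerivAt_arctan_sin_div_add_cos {m x : ℝ} (hm : m + cos x ≠ 0) :
    HasDerivAt (fun a => arctan (sin a / (m + cos a)))
      ((1 + m * cos x) / (m ^ 2 + 2 * m * cos x + 1)) x := by
  have hquot : HasDerivAt (fun a => sin a / (m + cos a))
      ((cos x * (m + cos x) - sin x * (0 + -sin x)) / (m + cos x) ^ 2) x :=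
    (hasDerivAt_sin x).div ((hasDerivAt_const x m).add (hasDerivAt_cos x)) hm
  refine hquot.arctan.congr_deriv ?_
  have hpos := sq_add_two_mul_cos_add_one_pos hm
  rw [sq_add_two_mul_cos_add_one_eq_sq_add_sin_sq] at hpos ⊢
  field_simp
  linear_combination sin_sq_add_cos_sq x

end Real

/-- The claimed derivative `θ'(x)` of `θ(a) = a - r arctan (sin a / (r - 1 + cos a))`. -/
noncomputable def thetaDeriv (r x : ℝ) : ℝ :=
  2 * (r - 1) * (r - 2) * sin (x / 2) ^ 2 / ((r - 2) ^ 2 + 4 * (r - 1) * cos (x / 2) ^ 2)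

theorem hasDerivAt_sub_mul_arctan_sin_div {r x : ℝ} (hr : r - 1 + cos x ≠ 0) :
    HasDerivAt (fun a => a - r * arctan (sin a / (r - 1 + cos a))) (thetaDeriv r x) x := by
  refine ((hasDerivAt_id x).sub
    ((hasDerivAt_arctan_sin_div_add_cos hr).const_mul r)).congr_deriv ?_
  have hD : (r - 2) ^ 2 + 4 * (r - 1) * cos (x / 2) ^ 2
      = (r - 1) ^ 2 + 2 * (r - 1) * cos x + 1 := by
    rw [sq_add_two_mul_cos_add_one_eq_cos_half]; ring
  have hpos := sq_add_two_mul_cos_add_one_pos hr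
  rw [thetaDeriv, hD, mul_div_assoc', one_sub_div hpos.ne', div_left_inj' hpos.ne']
  linear_combination -(r - 1) * (r - 2) * two_mul_sin_half_sq x

theorem thetaDeriv_nonneg {r : ℝ} (hr : 2 ≤ r) (x : ℝ) : 0 ≤ thetaDeriv r x := by
  have h1 : 0 ≤ r - 1 := by linarith
  have h2 : 0 ≤ r - 2 := by linarith
  unfold thetaDeriv
  positivity

theorem thetaDeriv_eq_zero_iff {r x : ℝ} (hr : 2 < r) (hx : x ∈ Set.Ioo (-π) π) :
    thetaDeriv r x = 0 ↔ x = 0 := by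
  have h1 : 0 < r - 1 := by linarith
  have h2 : 0 < r - 2 := by linarith
  have hD : (r - 2) ^ 2 + 4 * (r - 1) * cos (x / 2) ^ 2 ≠ 0 := by positivity
  have hc : 2 * (r - 1) * (r - 2) ≠ 0 := by positivity
  rw [thetaDeriv, div_eq_zero_iff, or_iff_left hD, mul_eq_zero, or_iff_right hc,
    pow_eq_zero_iff two_ne_zero,
    sin_eq_zero_iff_of_lt_of_lt (by linarith [hx.1, pi_pos]) (by linarith [hx.2, pi_pos]),
    div_eq_zero_iff, or_iff_left two_ne_zero]

/-- For `n ≥ 3` and `α ∈ (−π, π)`, the function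
`θ(α) = α − n · arctan(sin α / (n − 1 + cos α))` is differentiable at `α` with
derivative `2(n−1)(n−2) sin²(α/2) / ((n−2)² + 4(n−1) cos²(α/2))`, which is
nonnegative and vanishes exactly at `α = 0`. -/
theorem theta_hasDerivAt (n : ℕ) (hn : 3 ≤ n) (α : ℝ) (hα : α ∈ Set.Ioo (-π) π) :
    HasDerivAt
      (fun a : ℝ => a - n * Real.arctan (Real.sin a / ((n : ℝ) - 1 + Real.cos a)))
      (2 * ((n : ℝ) - 1) * ((n : ℝ) - 2) * Real.sin (α / 2) ^ 2 /
        (((n : ℝ) - 2) ^ 2 + 4 * ((n : ℝ) - 1) * Real.cos (α / 2) ^ 2)) α ∧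
    0 ≤ 2 * ((n : ℝ) - 1) * ((n : ℝ) - 2) * Real.sin (α / 2) ^ 2 /
        (((n : ℝ) - 2) ^ 2 + 4 * ((n : ℝ) - 1) * Real.cos (α / 2) ^ 2) ∧
    (2 * ((n : ℝ) - 1) * ((n : ℝ) - 2) * Real.sin (α / 2) ^ 2 /
        (((n : ℝ) - 2) ^ 2 + 4 * ((n : ℝ) - 1) * Real.cos (α / 2) ^ 2) = 0 ↔ α = 0) := by
  have hn3 : (3 : ℝ) ≤ n := by exact_mod_cast hn
  have hden : (n : ℝ) - 1 + cos α ≠ 0 := by linarith [neg_one_le_cos α]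
  exact ⟨hasDerivAt_sub_mul_arctan_sin_div hden, thetaDeriv_nonneg (by linarith) α,
    thetaDeriv_eq_zero_iff (by linarith) hα⟩
end

section
/- Let n ≥ 2 and define γ(α) = e^{iα} (1 − (1 − e^{−iα})/n)^n. Then for every α ∈ [−π, π] one has |γ(α)| ≥ (1 − 2/n)^n, with equality if and only if α = π or α = −π. -/
open Complex Real

/-!
Since `|e^{iα}| = 1`, we have `|γ(α)| = |z|ⁿ` with `z = (1 - 1/n) + (1/n) e^{-iα}`. For real `a, b`
and `|w| = 1`, `|a + b w|² = (a - b)² + 2ab(1 + Re w)`; with `a = 1 - 1/n`, `b = 1/n` and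
`Re w = cos α ≥ -1` this gives `|z| ≥ 1 - 2/n ≥ 0`, with equality exactly when `cos α = -1`, i.e.
`α = ±π` on `[-π, π]`.
-/

namespace Complex

theorem norm_ofReal_add_ofReal_mul_sq {w : ℂ} (hw : ‖w‖ = 1) (a b : ℝ) :
    ‖(a : ℂ) + b * w‖ ^ 2 = (a - b) ^ 2 + 2 * a * b * (1 + w.re) := by
  have hw2 : w.re ^ 2 + w.im ^ 2 = 1 := by
    have := normSq_eq_norm_sq w
    rw [hw, normSq_apply] at this
    linarith
  rw [Complex.sq_norm, normSq_apply]
  simp only [add_re, add_im, ofReal_re, ofReal_im, mul_re, mul_im]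
  linear_combination b ^ 2 * hw2

theorem abs_sub_le_norm_ofReal_add_ofReal_mul {w : ℂ} (hw : ‖w‖ = 1) {a b : ℝ}
    (ha : 0 ≤ a) (hb : 0 ≤ b) : |a - b| ≤ ‖(a : ℂ) + b * w‖ := by
  have hre : -1 ≤ w.re := by
    simpa [hw] using neg_le_of_abs_le (abs_re_le_norm w)
  rw [← sq_le_sq₀ (abs_nonneg _) (norm_nonneg _), sq_abs, norm_ofReal_add_ofReal_mul_sq hw]
  nlinarith [mul_nonneg ha hb]

theorem norm_ofReal_add_ofReal_mul_eq_abs_sub_iff {w : ℂ} (hw : ‖w‖ = 1) {a b : ℝ}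
    (ha : 0 < a) (hb : 0 < b) : ‖(a : ℂ) + b * w‖ = |a - b| ↔ w.re = -1 := by
  rw [← sq_eq_sq₀ (norm_nonneg _) (abs_nonneg _), sq_abs, norm_ofReal_add_ofReal_mul_sq hw]
  have hab : 2 * a * b ≠ 0 := by positivity
  constructor
  · intro h
    linarith [(mul_eq_zero.mp (add_eq_left.mp h)).resolve_left hab]
  · intro h
    rw [h]; ring

theorem one_sub_one_sub_div_natCast {n : ℕ} (hn : n ≠ 0) (w : ℂ) :
    1 - (1 - w) / n = ((1 - 1 / n : ℝ) : ℂ) + ((1 / n : ℝ) : ℂ) * w := by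
  have : (n : ℂ) ≠ 0 := Nat.cast_ne_zero.mpr hn
  push_cast
  field_simp
  ring

end Complex

namespace Real

theorem cos_eq_neg_one_iff_of_mem_Icc {α : ℝ} (hα : α ∈ Set.Icc (-π) π) :
    cos α = -1 ↔ α = π ∨ α = -π := by
  constructor
  · intro h
    have habs : |α| = π :=
      injOn_cos ⟨abs_nonneg α, abs_le.mpr hα⟩ ⟨pi_pos.le, le_rfl⟩ (by rw [cos_abs, h, cos_pi])
    exact (abs_eq pi_pos.le).mp habs
  · rintro (rfl | rfl) <;> simp

end Real

/-- For `n ≥ 2` and `α ∈ [−π, π]`, one has `|γ(α)| ≥ (1 − 2/n)ⁿ`, with equality iff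
`α = π` or `α = −π`, where `γ(α) = e^{iα}(1 − (1 − e^{−iα})/n)ⁿ`. -/
theorem abs_gamma_ge (n : ℕ) (hn : 2 ≤ n) (α : ℝ) (hα : α ∈ Set.Icc (-π) π) :
    (1 - 2 / (n : ℝ)) ^ n ≤ ‖Complex.exp (Complex.I * α) *
        (1 - (1 - Complex.exp (-(Complex.I * α))) / n) ^ n‖ ∧
    (‖Complex.exp (Complex.I * α) *
        (1 - (1 - Complex.exp (-(Complex.I * α))) / n) ^ n‖ = (1 - 2 / (n : ℝ)) ^ n ↔
      α = π ∨ α = -π) := by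
  set w := Complex.exp (-(Complex.I * α))
  have hw : ‖w‖ = 1 := by simp [w, Complex.norm_exp]
  have hw_re : w.re = Real.cos α := by simp [w, Complex.exp_re]
  have hn' : (2 : ℝ) ≤ n := by exact_mod_cast hn
  have ha : 0 < 1 - 1 / (n : ℝ) := by rw [sub_pos, div_lt_one (by linarith)]; linarith
  have hb : 0 < 1 / (n : ℝ) := by positivity
  have hab : |1 - 1 / (n : ℝ) - 1 / n| = 1 - 2 / n := by
    have hsub : 1 - 1 / (n : ℝ) - 1 / n = 1 - 2 / n := by ring
    rw [hsub, abs_of_nonneg (by rw [sub_nonneg, div_le_one (by linarith)]; exact hn')]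
  have hnorm : ‖Complex.exp (Complex.I * α) * (1 - (1 - w) / n) ^ n‖ =
      ‖((1 - 1 / n : ℝ) : ℂ) + ((1 / n : ℝ) : ℂ) * w‖ ^ n := by
    rw [norm_mul, norm_pow, Complex.norm_exp_I_mul_ofReal, one_mul,
      Complex.one_sub_one_sub_div_natCast (by omega)]
  rw [hnorm, ← hab]
  refine ⟨pow_le_pow_left₀ (abs_nonneg _)
    (Complex.abs_sub_le_norm_ofReal_add_ofReal_mul hw ha.le hb.le) n, ?_⟩
  rw [pow_left_inj₀ (norm_nonneg _) (abs_nonneg _) (by omega),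
    Complex.norm_ofReal_add_ofReal_mul_eq_abs_sub_iff hw ha hb, hw_re,
    Real.cos_eq_neg_one_iff_of_mem_Icc hα]
end

section
/- Let n ≥ 3, define Γ(α, y) = e^{iyα} (1 − (1 − e^{−iα}) y/n)^n and γ(α) = Γ(α, 1) = e^{iα} (1 − (1 − e^{−iα})/n)^n. Then for every integer m with 2 ≤ m ≤ n − 2 and every α ∈ [−π, π] with α ≠ 0, the point Γ(α, m) does not belong to the image γ([−π, π]): there is no α* ∈ [−π, π] with Γ(α, m) = γ(α*). -/
/-!
With `θ = α / 2` and `σ = (n - 2y) / n` one has `Γ(α, y) = (e^{-iσθ} (cos θ + iσ sin θ))ⁿ`.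
The curve `γ` is `σ = (n - 2) / n`, while `2 ≤ m ≤ n - 2` gives `|σ| < (n - 2) / n`; up to
complex conjugation both `σ` and `θ` may be taken nonnegative. Equal `n`-th powers have roots
of equal modulus, i.e. the same value `V` of `(1 - σ²) sin² θ`. Along the curve
`(1 - σ²) sin² θ = V` the argument `arcsin (σ sin θ / √(1 - V)) - σθ` of the root is strictly
increasing in `σ`, with derivative `tan θ - θ > 0`. It vanishes at `σ = 0` and on `γ` it is at
most `(1 - σ)θ = 2θ/n ≤ π/n`, so after multiplication by `n` the two arguments are distinct
points of `[0, π]` and the real parts of the two powers differ.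
-/

open Complex Real
open ComplexConjugate

noncomputable def ellipsePoint (σ θ : ℝ) : ℂ := Real.cos θ + σ * Real.sin θ * I

noncomputable def gammaRoot (σ θ : ℝ) : ℂ := exp (-(σ * θ * I)) * ellipsePoint σ θ

@[simp] lemma ellipsePoint_re (σ θ : ℝ) : (ellipsePoint σ θ).re = Real.cos θ := by
  simp [ellipsePoint, Complex.cos_ofReal_re]

@[simp] lemma ellipsePoint_im (σ θ : ℝ) : (ellipsePoint σ θ).im = σ * Real.sin θ := by
  simp [ellipsePoint, -ofReal_sin]

lemma sq_norm_ellipsePoint (σ θ : ℝ) :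
    ‖ellipsePoint σ θ‖ ^ 2 = 1 - (1 - σ ^ 2) * Real.sin θ ^ 2 := by
  rw [Complex.sq_norm, normSq_apply, ellipsePoint_re, ellipsePoint_im]
  linear_combination Real.cos_sq_add_sin_sq θ

lemma one_sub_mul_eq_exp_mul_ellipsePoint {n : ℝ} (hn : n ≠ 0) (y α : ℝ) :
    1 - (1 - exp (-(I * α))) * y / n =
      exp (-(α / 2 * I)) * ellipsePoint ((n - 2 * y) / n) (α / 2) := by
  rw [ellipsePoint, ofReal_cos, ofReal_sin, Complex.cos, Complex.sin]
  push_cast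
  have h1 : exp (-(I * α)) = (exp (α / 2 * I) ^ 2)⁻¹ := by
    rw [← Complex.exp_nat_mul, ← Complex.exp_neg]; ring_nf
  have h2 : exp (-(α / 2) * I) = (exp (α / 2 * I))⁻¹ := by
    rw [← Complex.exp_neg]; ring_nf
  rw [h1, h2, neg_mul_eq_neg_mul, h2]
  have hE : exp (α / 2 * I) ≠ 0 := Complex.exp_ne_zero _
  have hn' : (n : ℂ) ≠ 0 := ofReal_ne_zero.mpr hn
  generalize exp (α / 2 * I) = E at hE ⊢
  field_simp
  linear_combination (n - 2 * y) * (E ^ 2 - 1) * I_sq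

lemma exp_mul_one_sub_pow_eq_gammaRoot_pow {n : ℕ} (hn : n ≠ 0) (y α : ℝ) :
    exp (I * y * α) * (1 - (1 - exp (-(I * α))) * y / n) ^ n =
      gammaRoot ((n - 2 * y) / n) (α / 2) ^ n := by
  have hn' : (n : ℝ) ≠ 0 := Nat.cast_ne_zero.mpr hn
  have h := one_sub_mul_eq_exp_mul_ellipsePoint hn' y α
  push_cast at h
  rw [h, gammaRoot, mul_pow, mul_pow, ← mul_assoc, ← Complex.exp_nat_mul, ← Complex.exp_nat_mul,
    ← Complex.exp_add]
  congr 2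
  push_cast
  field_simp
  ring

lemma norm_gammaRoot (σ θ : ℝ) : ‖gammaRoot σ θ‖ = ‖ellipsePoint σ θ‖ := by
  rw [gammaRoot, norm_mul, ← neg_mul, ← ofReal_mul, ← ofReal_neg, norm_exp_ofReal_mul_I, one_mul]

lemma gammaRoot_neg_left (σ θ : ℝ) : gammaRoot (-σ) θ = conj (gammaRoot σ θ) := by
  apply Complex.ext <;>
    simp [gammaRoot, ellipsePoint, exp_re, exp_im, Complex.cos_ofReal_re, Complex.sin_ofReal_re]

lemma gammaRoot_neg_right (σ θ : ℝ) : gammaRoot σ (-θ) = conj (gammaRoot σ θ) := by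
  apply Complex.ext <;>
    simp [gammaRoot, ellipsePoint, exp_re, exp_im, Complex.cos_ofReal_re, Complex.sin_ofReal_re]

lemma gammaRoot_abs_abs (σ θ : ℝ) :
    gammaRoot |σ| |θ| = gammaRoot σ θ ∨ gammaRoot |σ| |θ| = conj (gammaRoot σ θ) := by
  rcases abs_choice σ with hσ | hσ <;> rcases abs_choice θ with hθ | hθ <;>
    simp [hσ, hθ, gammaRoot_neg_left, gammaRoot_neg_right]

lemma norm_gammaRoot_abs_abs (σ θ : ℝ) : ‖gammaRoot |σ| |θ|‖ = ‖gammaRoot σ θ‖ := by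
  rcases gammaRoot_abs_abs σ θ with h | h <;> simp [h]

lemma re_gammaRoot_abs_abs_pow (n : ℕ) (σ θ : ℝ) :
    (gammaRoot |σ| |θ| ^ n).re = (gammaRoot σ θ ^ n).re := by
  rcases gammaRoot_abs_abs σ θ with h | h <;> simp [h, ← map_pow]

lemma re_gammaRoot_pow (n : ℕ) (σ θ : ℝ) :
    (gammaRoot σ θ ^ n).re =
      ‖ellipsePoint σ θ‖ ^ n * Real.cos (n * (arg (ellipsePoint σ θ) - σ * θ)) := by
  have h : gammaRoot σ θ = ‖ellipsePoint σ θ‖ * exp ((arg (ellipsePoint σ θ) - σ * θ : ℝ) * I) := by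
    rw [gammaRoot]
    nth_rw 1 [← norm_mul_exp_arg_mul_I (ellipsePoint σ θ)]
    rw [mul_left_comm, ← Complex.exp_add]
    push_cast
    ring_nf
  rw [h, mul_pow, ← Complex.exp_nat_mul, ← ofReal_pow, ← ofReal_natCast, ← mul_assoc, ← ofReal_mul,
    re_ofReal_mul, exp_ofReal_mul_I_re]

lemma arg_ellipsePoint {σ θ : ℝ} (hθ : θ ∈ Set.Icc (-(π / 2)) (π / 2)) :
    arg (ellipsePoint σ θ) = arcsin (σ * Real.sin θ / ‖ellipsePoint σ θ‖) := by
  rw [arg_of_re_nonneg (by simpa using cos_nonneg_of_mem_Icc hθ), ellipsePoint_im]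

lemma arg_ellipsePoint_le {σ θ : ℝ} (hσ : σ ^ 2 ≤ 1) (hθ : θ ∈ Set.Icc 0 (π / 2)) :
    arg (ellipsePoint σ θ) ≤ θ := by
  have hsin : 0 ≤ Real.sin θ := sin_nonneg_of_nonneg_of_le_pi hθ.1 (by linarith [hθ.2, pi_pos])
  have hσe : σ ≤ ‖ellipsePoint σ θ‖ := by
    refine (le_abs_self σ).trans (abs_le_of_sq_le_sq ?_ (norm_nonneg _))
    rw [sq_norm_ellipsePoint]
    nlinarith [mul_nonneg (sub_nonneg.mpr hσ) (sub_nonneg.mpr (sin_sq_le_one θ))]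
  rw [arg_ellipsePoint ⟨by linarith [hθ.1, pi_pos], hθ.2⟩]
  calc arcsin (σ * Real.sin θ / ‖ellipsePoint σ θ‖) ≤ arcsin (Real.sin θ) :=
        arcsin_le_arcsin (div_le_of_le_mul₀ (norm_nonneg _) hsin (by nlinarith))
    _ = θ := arcsin_sin (by linarith [hθ.1, pi_pos]) hθ.2

/-- On the curve `(1 - σ²) sin² θ = V`, along which `‖ellipsePoint σ θ‖ = √(1 - V)`,
`levelAngle V σ` is `θ ∈ [0, π/2]` as a function of `σ`, and `levelArg V σ` is the argument
`arg (ellipsePoint σ θ) - σθ` of `gammaRoot σ θ`. -/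
noncomputable def levelAngle (V σ : ℝ) : ℝ := arcsin (√V / √(1 - σ ^ 2))

noncomputable def levelArg (V σ : ℝ) : ℝ :=
  arcsin (σ * √V / (√(1 - σ ^ 2) * √(1 - V))) - σ * levelAngle V σ

section
variable {V x : ℝ}

lemma hasDerivAt_sqrt_one_sub_sq (hx : x ^ 2 < 1) :
    HasDerivAt (fun x : ℝ => √(1 - x ^ 2)) (-x / √(1 - x ^ 2)) x := by
  have h := ((hasDerivAt_pow 2 x).const_sub 1).sqrt (by linarith)
  convert h using 1
  ring

lemma tan_levelAngle (hV : 0 ≤ V) (hx : x ^ 2 + V < 1) :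
    Real.tan (levelAngle V x) = √V / √(1 - x ^ 2 - V) := by
  have ha : 0 < 1 - x ^ 2 := by linarith
  rw [levelAngle, tan_arcsin, div_pow, sq_sqrt hV, sq_sqrt ha.le, one_sub_div ha.ne',
    sqrt_div' _ ha.le, div_div_div_cancel_right₀ (sqrt_pos.mpr ha).ne', sub_sub]

lemma hasDerivAt_levelAngle (hV : 0 < V) (hx : x ^ 2 + V < 1) :
    HasDerivAt (levelAngle V) (x * Real.tan (levelAngle V x) / (1 - x ^ 2)) x := by
  have ha : 0 < 1 - x ^ 2 := by linarith
  have hc : 0 < 1 - x ^ 2 - V := by linarith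
  have hq : √V / √(1 - x ^ 2) < 1 := by
    rw [div_lt_one (sqrt_pos.mpr ha)]; exact sqrt_lt_sqrt hV.le (by linarith)
  have hq0 : 0 < √V / √(1 - x ^ 2) := div_pos (sqrt_pos.mpr hV) (sqrt_pos.mpr ha)
  have h := (hasDerivAt_arcsin (by linarith) hq.ne).comp x
    ((hasDerivAt_const x √V).fun_div (hasDerivAt_sqrt_one_sub_sq (by linarith))
      (sqrt_pos.mpr ha).ne')
  refine h.congr_deriv ?_
  rw [tan_levelAngle hV.le hx, div_pow, sq_sqrt hV.le, sq_sqrt ha.le, one_sub_div ha.ne',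
    sqrt_div' _ ha.le, sub_sub]
  have := sq_sqrt ha.le
  have := sqrt_pos.mpr hc
  have := sqrt_pos.mpr ha
  field_simp
  ring

lemma hasDerivAt_levelArg (hV : 0 < V) (hx : x ^ 2 + V < 1) :
    HasDerivAt (levelArg V) (Real.tan (levelAngle V x) - levelAngle V x) x := by
  have ha : 0 < 1 - x ^ 2 := by linarith
  have hc : 0 < 1 - x ^ 2 - V := by linarith
  have hr : 0 < 1 - V := by linarith [sq_nonneg x]
  have har : 0 < √(1 - x ^ 2) * √(1 - V) := mul_pos (sqrt_pos.mpr ha) (sqrt_pos.mpr hr)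
  set q := x * √V / (√(1 - x ^ 2) * √(1 - V))
  have hsq : 1 - q ^ 2 = (√(1 - x ^ 2 - V) / (√(1 - x ^ 2) * √(1 - V))) ^ 2 := by
    rw [div_pow, div_pow, mul_pow, mul_pow, sq_sqrt hV.le, sq_sqrt ha.le, sq_sqrt hr.le,
      sq_sqrt hc.le]
    field_simp
    ring
  have hq : q ^ 2 < 1 := by
    have : 0 < (√(1 - x ^ 2 - V) / (√(1 - x ^ 2) * √(1 - V))) ^ 2 := by
      have := sqrt_pos.mpr hc; positivity
    linarith
  have hq1 : q ≠ -1 := fun h => by rw [h] at hq; norm_num at hq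
  have hq2 : q ≠ 1 := fun h => by rw [h] at hq; norm_num at hq
  have hden : HasDerivAt (fun y => √(1 - y ^ 2) * √(1 - V)) (-x / √(1 - x ^ 2) * √(1 - V)) x :=
    (hasDerivAt_sqrt_one_sub_sq (by linarith)).mul_const _
  have h := ((hasDerivAt_arcsin hq1 hq2).comp x
    ((hasDerivAt_mul_const √V).fun_div hden har.ne')).sub
    ((hasDerivAt_id' x).mul (hasDerivAt_levelAngle hV hx))
  refine h.congr_deriv ?_
  rw [hsq, sqrt_sq (div_pos (sqrt_pos.mpr hc) har).le, tan_levelAngle hV.le hx]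
  have ha2 := sq_sqrt ha.le
  have := sqrt_pos.mpr hc
  have := sqrt_pos.mpr ha
  have := sqrt_pos.mpr hr
  field_simp
  rw [ha2]
  ring

lemma levelAngle_mem_Ioo (hV : 0 < V) (hx : x ^ 2 + V < 1) :
    levelAngle V x ∈ Set.Ioo 0 (π / 2) := by
  have ha : 0 < 1 - x ^ 2 := by linarith
  refine ⟨arcsin_pos.mpr (div_pos (sqrt_pos.mpr hV) (sqrt_pos.mpr ha)),
    arcsin_lt_pi_div_two.mpr ?_⟩
  rw [div_lt_one (sqrt_pos.mpr ha)]
  exact sqrt_lt_sqrt hV.le (by linarith)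

lemma strictMonoOn_levelArg {s : ℝ} (hV : 0 < V) (hs0 : 0 < s) (hs : s ^ 2 + V ≤ 1) :
    StrictMonoOn (levelArg V) (Set.Icc (-s) s) := by
  have hlt : ∀ y ∈ Set.Ioo (-s) s, y ^ 2 + V < 1 := fun y ⟨h1, h2⟩ => by nlinarith
  have hcont : ContinuousOn (levelArg V) (Set.Icc (-s) s) := by
    have ha : ∀ y ∈ Set.Icc (-s) s, √(1 - y ^ 2) ≠ 0 := fun y ⟨h1, h2⟩ =>
      (sqrt_pos.mpr (by nlinarith)).ne'
    have har : ∀ y ∈ Set.Icc (-s) s, √(1 - y ^ 2) * √(1 - V) ≠ 0 := fun y hy =>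
      mul_ne_zero (ha y hy) (sqrt_pos.mpr (by nlinarith)).ne'
    exact (continuous_arcsin.comp_continuousOn (by fun_prop (disch := exact har))).sub
      (continuousOn_id.mul (continuous_arcsin.comp_continuousOn (by fun_prop (disch := exact ha))))
  refine strictMonoOn_of_deriv_pos (convex_Icc _ _) hcont fun y hy => ?_
  rw [interior_Icc] at hy
  obtain ⟨h0, hπ⟩ := levelAngle_mem_Ioo hV (hlt y hy)
  rw [(hasDerivAt_levelArg hV (hlt y hy)).deriv]
  linarith [lt_tan h0 hπ]

end

lemma arg_ellipsePoint_sub_mul_eq_levelArg {σ θ : ℝ} (hσ : σ ^ 2 < 1)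
    (hθ : θ ∈ Set.Icc 0 (π / 2)) :
    arg (ellipsePoint σ θ) - σ * θ = levelArg ((1 - σ ^ 2) * Real.sin θ ^ 2) σ := by
  have hsin : 0 ≤ Real.sin θ := sin_nonneg_of_nonneg_of_le_pi hθ.1 (by linarith [hθ.2, pi_pos])
  have ha : 0 < √(1 - σ ^ 2) := sqrt_pos.mpr (by linarith)
  have hsqrtV : √((1 - σ ^ 2) * Real.sin θ ^ 2) / √(1 - σ ^ 2) = Real.sin θ := by
    rw [sqrt_mul (by linarith), sqrt_sq hsin, mul_div_cancel_left₀ _ ha.ne']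
  have hnorm : √(1 - (1 - σ ^ 2) * Real.sin θ ^ 2) = ‖ellipsePoint σ θ‖ := by
    rw [← sq_norm_ellipsePoint, sqrt_sq (norm_nonneg _)]
  have hangle : levelAngle ((1 - σ ^ 2) * Real.sin θ ^ 2) σ = θ := by
    rw [levelAngle, hsqrtV, arcsin_sin (by linarith [hθ.1, pi_pos]) hθ.2]
  rw [levelArg, hangle, hnorm, mul_div_assoc, ← div_div, hsqrtV, ← mul_div_assoc,
    arg_ellipsePoint ⟨by linarith [hθ.1, pi_pos], hθ.2⟩]

lemma re_gammaRoot_pow_ne {n : ℕ} {σ s θ θs : ℝ} (hn : 0 < n) (hns : n * (1 - s) ≤ 2)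
    (hσ : 0 ≤ σ) (hσs : σ < s) (hs : s < 1) (hθ : θ ∈ Set.Ioc 0 (π / 2))
    (hθs : θs ∈ Set.Icc 0 (π / 2)) (hnorm : ‖gammaRoot σ θ‖ = ‖gammaRoot s θs‖) :
    (gammaRoot σ θ ^ n).re ≠ (gammaRoot s θs ^ n).re := by
  rw [norm_gammaRoot, norm_gammaRoot] at hnorm
  set V := (1 - σ ^ 2) * Real.sin θ ^ 2 with hV
  have hVs : (1 - s ^ 2) * Real.sin θs ^ 2 = V := by
    have h := congrArg (· ^ 2) hnorm
    simp only [sq_norm_ellipsePoint] at h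
    linarith
  have hV0 : 0 < V :=
    mul_pos (by nlinarith) (pow_pos (sin_pos_of_pos_of_lt_pi hθ.1 (by linarith [hθ.2, pi_pos])) 2)
  have hsV : s ^ 2 + V ≤ 1 := by
    rw [← hVs]
    nlinarith [mul_nonneg (by nlinarith : 0 ≤ 1 - s ^ 2) (sub_nonneg.mpr (sin_sq_le_one θs))]
  have hmono := strictMonoOn_levelArg hV0 (hσ.trans_lt hσs) hsV
  have hG : levelArg V σ < levelArg V s := hmono ⟨by linarith, hσs.le⟩ ⟨by linarith, le_rfl⟩ hσs
  have hG0 : 0 ≤ levelArg V σ := by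
    simpa [levelArg] using
      hmono.monotoneOn (a := 0) ⟨by linarith, by linarith⟩ ⟨by linarith, hσs.le⟩ hσ
  have hGs : levelArg V s ≤ (1 - s) * θs := by
    rw [← hVs, ← arg_ellipsePoint_sub_mul_eq_levelArg (by nlinarith) hθs]
    linarith [arg_ellipsePoint_le (by nlinarith) hθs]
  have hGπ : n * levelArg V s ≤ π := calc
    n * levelArg V s ≤ n * ((1 - s) * θs) := by gcongr
    _ ≤ 2 * θs := by rw [← mul_assoc]; exact mul_le_mul_of_nonneg_right hns hθs.1
    _ ≤ π := by linarith [hθs.2]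
  have hnG : (n : ℝ) * levelArg V σ < n * levelArg V s := by gcongr
  have hpos : 0 < ‖ellipsePoint s θs‖ ^ n := by
    refine pow_pos (lt_of_pow_lt_pow_left₀ 2 (norm_nonneg _) ?_) n
    rw [sq_norm_ellipsePoint, hVs]; nlinarith
  rw [re_gammaRoot_pow, re_gammaRoot_pow,
    arg_ellipsePoint_sub_mul_eq_levelArg (by nlinarith) ⟨hθ.1.le, hθ.2⟩,
    arg_ellipsePoint_sub_mul_eq_levelArg (by nlinarith) hθs, hVs, ← hV, hnorm]
  intro h
  have hnG0 : 0 ≤ (n : ℝ) * levelArg V σ := mul_nonneg n.cast_nonneg hG0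
  exact (strictAntiOn_cos ⟨hnG0, by linarith⟩ ⟨by linarith, hGπ⟩ hnG).ne'
    (mul_left_cancel₀ hpos.ne' h)

lemma abs_half_mem_Icc {α : ℝ} (hα : α ∈ Set.Icc (-π) π) : |α / 2| ∈ Set.Icc 0 (π / 2) :=
  ⟨abs_nonneg _, by rw [abs_div, abs_two]; linarith [abs_le.mpr hα]⟩

theorem Gamma_not_on_gamma_general (n m : ℕ) (hm : 2 ≤ m) (hmn : m ≤ n - 2)
    (α : ℝ) (hα : α ∈ Set.Icc (-π) π) (hα0 : α ≠ 0) :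
    ¬ ∃ αstar ∈ Set.Icc (-π) π,
      Complex.exp (Complex.I * m * α) *
          (1 - (1 - Complex.exp (-(Complex.I * α))) * m / n) ^ n =
        Complex.exp (Complex.I * αstar) *
          (1 - (1 - Complex.exp (-(Complex.I * αstar))) / n) ^ n := by
  rintro ⟨αs, hαs, heq⟩
  have hn0 : n ≠ 0 := by omega
  have hΓ := exp_mul_one_sub_pow_eq_gammaRoot_pow hn0 m α
  have hγ := exp_mul_one_sub_pow_eq_gammaRoot_pow hn0 1 αs
  push_cast at hΓ hγ
  simp only [mul_one] at hγ
  rw [hΓ, hγ] at heq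
  have hnR : (0 : ℝ) < n := by positivity
  have hmR : (2 : ℝ) ≤ m ∧ (m : ℝ) + 2 ≤ n :=
    ⟨by exact_mod_cast hm, by exact_mod_cast (by omega : m + 2 ≤ n)⟩
  have hs : |((n : ℝ) - 2) / n| = (n - 2) / n := abs_of_nonneg (div_nonneg (by linarith) hnR.le)
  have hσs : |((n : ℝ) - 2 * m) / n| < (n - 2) / n := by
    rw [abs_div, abs_of_pos hnR]; gcongr; rw [abs_lt]; constructor <;> linarith
  refine re_gammaRoot_pow_ne (Nat.pos_of_ne_zero hn0) ?_ (abs_nonneg _) (hs ▸ hσs) ?_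
    ⟨abs_pos.mpr (div_ne_zero hα0 two_ne_zero), (abs_half_mem_Icc hα).2⟩ (abs_half_mem_Icc hαs)
    ?_ ?_
  · rw [hs]; field_simp; linarith
  · rw [hs, div_lt_one hnR]; linarith
  · rw [norm_gammaRoot_abs_abs, norm_gammaRoot_abs_abs]
    exact (pow_left_inj₀ (norm_nonneg _) (norm_nonneg _) hn0).mp
      (by rw [← norm_pow, ← norm_pow, heq])
  · rw [re_gammaRoot_abs_abs_pow, re_gammaRoot_abs_abs_pow, heq]

/-- For `n ≥ 3`, `2 ≤ m ≤ n − 2` and `α ∈ [−π, π]` with `α ≠ 0`, the point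
`Γ(α, m) = e^{imα}(1 − (1 − e^{−iα}) m/n)ⁿ` does not lie on the image of the curve
`γ(α*) = e^{iα*}(1 − (1 − e^{−iα*})/n)ⁿ`, `α* ∈ [−π, π]`. -/
theorem Gamma_not_on_gamma (n m : ℕ) (hn : 3 ≤ n) (hm : 2 ≤ m) (hmn : m ≤ n - 2)
    (α : ℝ) (hα : α ∈ Set.Icc (-π) π) (hα0 : α ≠ 0) :
    ¬ ∃ αstar ∈ Set.Icc (-π) π,
      Complex.exp (Complex.I * m * α) *
          (1 - (1 - Complex.exp (-(Complex.I * α))) * m / n) ^ n =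
        Complex.exp (Complex.I * αstar) *
          (1 - (1 - Complex.exp (-(Complex.I * αstar))) / n) ^ n :=
  Gamma_not_on_gamma_general n m hm hmn α hα hα0
end
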